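/- arXiv:1712.08931 — 4 statements merged into one kernel-verified Lean document; each statement's English description precedes it below -/
import Mathlib

section
/- Let X be a reflexive Banach space and let (f_n) be a sequence of representative functions on X × X* such that each operator T_n := L(f_n) = {(x, x*) : f_n(x, x*) = ⟨x, x*⟩} is maximal monotone. If (f_n) epi-converges to f, then L(f) = liminf T_n, where liminf T_n is the set of all strong limits lim_n (x_n, x_n*) with (x_n, x_n*) ∈ T_n for all n. -/
open Filter Topology
noncomputable section
variable {X : Type*} [NormedAddCommGroup X] [NormedSpace ℝ X]

def pairing (p : X × StrongDual ℝ X) : ℝ := p.2 p.1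

def ConvexERealOn {E : Type*} [AddCommGroup E] [Module ℝ E] (f : E → EReal) : Prop :=
  ∀ x y : E, ∀ a b : ℝ, 0 ≤ a → 0 ≤ b → a + b = 1 →
    f (a • x + b • y) ≤ (a : EReal) * f x + (b : EReal) * f y

def IsGamma {E : Type*} [AddCommGroup E] [Module ℝ E] [TopologicalSpace E] (f : E → EReal) : Prop :=
  LowerSemicontinuous f ∧ ConvexERealOn f ∧ ∀ x, f x ≠ ⊥

def EpiConverges {E : Type*} [TopologicalSpace E] (fs : ℕ → E → EReal) (f : E → EReal) : Prop :=
  ∀ z : E,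
    (∃ zs : ℕ → E, Tendsto zs atTop (nhds z) ∧
      Tendsto (fun n => fs n (zs n)) atTop (nhds (f z))) ∧
    (∀ zs : ℕ → E, Tendsto zs atTop (nhds z) →
      f z ≤ Filter.liminf (fun n => fs n (zs n)) atTop)

def conjFn (f : X × StrongDual ℝ X → EReal) (q : StrongDual ℝ X × X) : EReal :=
  ⨆ p : X × StrongDual ℝ X, (((q.1 p.1 + p.2 q.2 : ℝ) : EReal) - f p)

def Lset (f : X × StrongDual ℝ X → EReal) : Set (X × StrongDual ℝ X) :=
  {p | f p = (pairing p : EReal)}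

def MonotoneSet (T : Set (X × StrongDual ℝ X)) : Prop :=
  ∀ p ∈ T, ∀ q ∈ T, 0 ≤ (q.2 - p.2) (q.1 - p.1)

def MaximalMonotone (T : Set (X × StrongDual ℝ X)) : Prop :=
  MonotoneSet T ∧ ∀ S : Set (X × StrongDual ℝ X), MonotoneSet S → T ⊆ S → S = T

def OpLiminf (Ts : ℕ → Set (X × StrongDual ℝ X)) : Set (X × StrongDual ℝ X) :=
  {p | ∃ zs : ℕ → X × StrongDual ℝ X, (∀ n, zs n ∈ Ts n) ∧ Tendsto zs atTop (nhds p)}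

def fitz (T : Set (X × StrongDual ℝ X)) (p : X × StrongDual ℝ X) : EReal :=
  ⨆ q ∈ T, (((p.2 - q.2) (q.1 - p.1) + p.2 p.1 : ℝ) : EReal)

open Classical in
def indic (T : Set (X × StrongDual ℝ X)) (p : X × StrongDual ℝ X) : EReal :=
  if p ∈ T then 0 else ⊤

def IsRepFunOf (g : X × StrongDual ℝ X → EReal) (T : Set (X × StrongDual ℝ X)) : Prop :=
  IsGamma g ∧ (∀ p, (pairing p : EReal) ≤ g p) ∧ ∀ p, (g p = (pairing p : EReal) ↔ p ∈ T)

def IsReflexive (X : Type*) [NormedAddCommGroup X] [NormedSpace ℝ X] : Prop :=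
  Function.Surjective (NormedSpace.inclusionInDoubleDual ℝ X)

def WeakTendstoProd (zs : ℕ → X × StrongDual ℝ X) (z : X × StrongDual ℝ X) : Prop :=
  (∀ g : StrongDual ℝ X, Tendsto (fun n => g (zs n).1) atTop (nhds (g z.1))) ∧
  (∀ G : StrongDual ℝ (StrongDual ℝ X),
    Tendsto (fun n => G (zs n).2) atTop (nhds (G z.2)))

def MoscoConverges (fs : ℕ → X × StrongDual ℝ X → EReal)
    (f : X × StrongDual ℝ X → EReal) : Prop :=
  ∀ z : X × StrongDual ℝ X,
    (∃ zs : ℕ → X × StrongDual ℝ X, Tendsto zs atTop (nhds z) ∧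
      Tendsto (fun n => fs n (zs n)) atTop (nhds (f z))) ∧
    (∀ zs : ℕ → X × StrongDual ℝ X, WeakTendstoProd zs z →
      f z ≤ Filter.liminf (fun n => fs n (zs n)) atTop)

def Tset (h : X × StrongDual ℝ X → EReal) : Set (X × StrongDual ℝ X) :=
  {p | ((2 * pairing p : ℝ) : EReal) = h p + conjFn h (p.2, p.1)}

/-! The inclusion `liminf T_n ⊆ L(f)` is the liminf inequality of epi-convergence, combined with
`f_n ≥ ⟨·,·⟩`, which passes to the epi-limit.

For `L(f) ⊆ liminf T_n`, take a recovery sequence `z_n → z`, so `f_n(z_n) ≤ ⟨z_n⟩ + ε_n` with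
`ε_n → 0`; it suffices that a representative function `h` of a maximal monotone operator with
`h(z₀) ≤ ⟨z₀⟩ + ε` has a point of `L(h)` within `√(2ε)` of `z₀`. The penalty
`g(y) = ½‖y₁ - z₀₁‖² + ½‖y₂ - z₀₂‖² + ⟨z₀⟩ - ⟨y₁, z₀₂⟩ - ⟨z₀₁, y₂⟩` satisfies `⟨y⟩ + g(y) ≥ 0`,
so `h + g ≥ 0`, and separating the epigraph of `h` from the open hypograph of `-g` yields a
functional `φ` with `h ≥ -g^*(φ) - φ`. By reflexivity `φ = (v*, v)`, and the explicit conjugate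
of the quadratic part makes `(-v, -v*)` monotonically related to `L(h)`, hence a point of `L(h)`
by maximality; evaluating the bound at `z₀` puts it within `√(2ε)` of `z₀`. -/

lemma continuous_pairing : Continuous (pairing : X × StrongDual ℝ X → ℝ) :=
  isBoundedBilinearMap_apply.continuous.comp continuous_swap

lemma neg_opNorm_mul_norm_le_apply {E : Type*} [NormedAddCommGroup E] [NormedSpace ℝ E]
    (f : StrongDual ℝ E) (x : E) : -(‖f‖ * ‖x‖) ≤ f x :=
  neg_le_of_abs_le (f.le_opNorm x)

lemma sub_apply_sub_comm (p q : X × StrongDual ℝ X) :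
    (p.2 - q.2) (p.1 - q.1) = (q.2 - p.2) (q.1 - p.1) := by
  rw [← neg_sub q.2, ← neg_sub q.1, neg_apply, map_neg, neg_neg]

lemma MaximalMonotone.nonempty {T : Set (X × StrongDual ℝ X)} (hT : MaximalMonotone T) :
    T.Nonempty := by
  rw [Set.nonempty_iff_ne_empty]
  intro h
  have hmono : MonotoneSet ({0} : Set (X × StrongDual ℝ X)) := by
    rintro p rfl q rfl
    simp
  simpa [h] using hT.2 {0} hmono (by simp [h])

lemma MaximalMonotone.mem_of_forall {T : Set (X × StrongDual ℝ X)} (hT : MaximalMonotone T)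
    {p : X × StrongDual ℝ X} (hp : ∀ q ∈ T, 0 ≤ (q.2 - p.2) (q.1 - p.1)) : p ∈ T := by
  have hmono : MonotoneSet (insert p T) := by
    rintro q (rfl | hq) r (rfl | hr)
    · simp
    · exact hp r hr
    · rw [sub_apply_sub_comm]; exact hp q hq
    · exact hT.1 q hq r hr
  exact hT.2 _ hmono (Set.subset_insert p T) ▸ Set.mem_insert p T

lemma ConvexERealOn.convex_epigraph {E : Type*} [AddCommGroup E] [Module ℝ E] {f : E → EReal}
    (hf : ConvexERealOn f) (hbot : ∀ x, f x ≠ ⊥) : Convex ℝ {p : E × ℝ | f p.1 ≤ p.2} := by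
  intro p (hp : f p.1 ≤ p.2) q (hq : f q.1 ≤ q.2) a b ha hb hab
  have hreal : ∀ r : E × ℝ, f r.1 ≤ r.2 → f r.1 = ((f r.1).toReal : EReal) := fun r hr =>
    (EReal.coe_toReal (ne_top_of_le_ne_top (EReal.coe_ne_top _) hr) (hbot _)).symm
  have hp' := hreal p hp
  have hq' := hreal q hq
  rw [hp', EReal.coe_le_coe_iff] at hp
  rw [hq', EReal.coe_le_coe_iff] at hq
  show f (a • p + b • q).1 ≤ (a • p + b • q).2
  calc f (a • p + b • q).1 = f (a • p.1 + b • q.1) := rfl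
    _ ≤ a * f p.1 + b * f q.1 := hf _ _ a b ha hb hab
    _ = ((a * (f p.1).toReal + b * (f q.1).toReal : ℝ) : EReal) := by
        rw [hp', hq']; norm_cast
    _ ≤ ((a • p + b • q).2 : EReal) := by
        simp only [Prod.snd_add, Prod.smul_snd, smul_eq_mul, EReal.coe_le_coe_iff]
        gcongr

lemma exists_clm_le_of_nonneg_add {E : Type*} [NormedAddCommGroup E] [NormedSpace ℝ E]
    {h : E → EReal} {g : E → ℝ} (hh : ConvexERealOn h) (hbot : ∀ x, h x ≠ ⊥)
    (hdom : ∃ x, h x ≠ ⊤) (hg : ConvexOn ℝ Set.univ g) (hgc : Continuous g)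
    (hnonneg : ∀ x, 0 ≤ h x + g x) :
    ∃ φ : StrongDual ℝ E, ∀ y z, ((φ (y - z) : ℝ) : EReal) ≤ h z + g y := by
  set s : Set (E × ℝ) := {p | p.2 < -g p.1}
  have hs_open : IsOpen s := isOpen_lt continuous_snd (hgc.comp continuous_fst).neg
  have hs_conv : Convex ℝ s := by simpa using hg.neg.convex_strict_hypograph
  have hdisj : Disjoint s {p | h p.1 ≤ p.2} := by
    refine Set.disjoint_left.mpr fun p (hs : p.2 < -g p.1) (ht : h p.1 ≤ p.2) => ?_
    have : h p.1 + g p.1 < 0 := by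
      calc h p.1 + g p.1 ≤ ((p.2 + g p.1 : ℝ) : EReal) := by
            rw [EReal.coe_add]; exact add_le_add_left ht _
        _ < 0 := by exact_mod_cast (by linarith : p.2 + g p.1 < 0)
    exact (hnonneg p.1).not_gt this
  obtain ⟨F, u, hFs, hFt⟩ :=
    geometric_hahn_banach_open hs_conv hs_open (hh.convex_epigraph hbot) hdisj
  set c := F (0, 1)
  have hF : ∀ y r, F (y, r) = F (y, 0) + r * c := fun y r => by
    rw [← smul_eq_mul, ← map_smul, ← map_add]; simp
  have hs_mem : ∀ y (δ : ℝ), 0 < δ → (y, -g y - δ) ∈ s := fun y δ hδ => by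
    show -g y - δ < -g y; linarith
  obtain ⟨z₁, hz₁⟩ := hdom
  have hc : 0 < c := by
    set r₁ := (h z₁).toReal
    have hr₁ : h z₁ = r₁ := (EReal.coe_toReal hz₁ (hbot z₁)).symm
    have h1 := hFs _ (hs_mem z₁ 1 one_pos)
    have h2 := hFt (z₁, r₁) hr₁.le
    have h3 : 0 ≤ r₁ + g z₁ := by
      have := hnonneg z₁; rw [hr₁] at this; exact_mod_cast this
    rw [hF] at h1 h2
    nlinarith
  refine ⟨c⁻¹ • F.comp (.inl ℝ E ℝ), fun y z => ?_⟩
  rcases eq_or_ne (h z) ⊤ with hz | hz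
  · simp [hz]
  set r := (h z).toReal
  have hr : h z = r := (EReal.coe_toReal hz (hbot z)).symm
  rw [hr, ← EReal.coe_add, EReal.coe_le_coe_iff]
  have hbound : ∀ δ : ℝ, 0 < δ → F (y, 0) - F (z, 0) < (r + g y + δ) * c := fun δ hδ => by
    have h1 := hFs _ (hs_mem y δ hδ)
    have h2 := hFt (z, r) hr.le
    rw [hF] at h1 h2
    linarith
  have hle : F (y, 0) - F (z, 0) ≤ (r + g y) * c := by
    refine le_of_forall_pos_lt_add fun δ hδ => ?_
    have := hbound (δ / c) (div_pos hδ hc)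
    rwa [add_mul, div_mul_cancel₀ _ hc.ne'] at this
  simp only [smul_apply, ContinuousLinearMap.comp_apply,
    ContinuousLinearMap.inl_apply, smul_eq_mul]
  rw [inv_mul_le_iff₀ hc, ← sub_self (0 : ℝ), ← Prod.mk_sub_mk, map_sub]
  linarith

lemma half_sq_opNorm_le_of_forall {E : Type*} [NormedAddCommGroup E] [NormedSpace ℝ E]
    (a : StrongDual ℝ E) {c : ℝ} (h : ∀ u, a u - ‖u‖ ^ 2 / 2 ≤ c) : ‖a‖ ^ 2 / 2 ≤ c := by
  by_contra! hlt
  have hc : 0 ≤ c := by simpa using h 0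
  have ha : 0 < ‖a‖ := by nlinarith [norm_nonneg a]
  obtain ⟨r, hr, hra⟩ := exists_between (show √(2 * c) < ‖a‖ by
    rw [Real.sqrt_lt' ha]; linarith)
  have hr0 : 0 < r := (Real.sqrt_nonneg _).trans_lt hr
  have hr2 : 2 * c < r ^ 2 := (Real.sqrt_lt' hr0).mp hr
  obtain ⟨x, hx, hax⟩ := a.exists_lt_apply_of_lt_opNorm hra
  -- test `a` against `±r • x`, where it exceeds `r ^ 2 / 2 > c`
  obtain ⟨x', hx', hax'⟩ : ∃ x' : E, ‖x'‖ < 1 ∧ r < a x' := by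
    rcases lt_abs.mp (Real.norm_eq_abs _ ▸ hax) with h' | h'
    · exact ⟨x, hx, h'⟩
    · exact ⟨-x, by rwa [norm_neg], by rwa [map_neg]⟩
  have := h (r • x')
  rw [map_smul, smul_eq_mul, norm_smul, Real.norm_of_nonneg hr0.le] at this
  have hx'1 : ‖x'‖ ^ 2 < 1 := by nlinarith [norm_nonneg x']
  nlinarith [mul_lt_mul_of_pos_left hax' hr0, mul_le_mul_of_nonneg_left hx'1.le (sq_nonneg r)]

lemma half_sq_norm_add_le_of_forall (a' : StrongDual ℝ X) (a : X) {c : ℝ}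
    (h : ∀ u : X × StrongDual ℝ X, a' u.1 + u.2 a - (‖u.1‖ ^ 2 / 2 + ‖u.2‖ ^ 2 / 2) ≤ c) :
    ‖a'‖ ^ 2 / 2 + ‖a‖ ^ 2 / 2 ≤ c := by
  have h₂ : ∀ u₂ : StrongDual ℝ X, u₂ a - ‖u₂‖ ^ 2 / 2 ≤ c - ‖a'‖ ^ 2 / 2 := fun u₂ => by
    have := half_sq_opNorm_le_of_forall a' (c := c - (u₂ a - ‖u₂‖ ^ 2 / 2))
      fun u₁ => by linarith [h (u₁, u₂)]
    linarith
  have := half_sq_opNorm_le_of_forall (NormedSpace.inclusionInDoubleDualLi ℝ a) h₂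
  rw [LinearIsometry.norm_map] at this
  linarith

lemma IsReflexive.exists_apply_eq (hrefl : IsReflexive X)
    (φ : StrongDual ℝ (X × StrongDual ℝ X)) :
    ∃ (v : X) (v' : StrongDual ℝ X), ∀ u, φ u = v' u.1 + u.2 v := by
  obtain ⟨v, hv⟩ := hrefl (φ.comp (.inr ℝ X (StrongDual ℝ X)))
  refine ⟨v, φ.comp (.inl ℝ X (StrongDual ℝ X)), fun u => ?_⟩
  rw [← φ.comp_inl_add_comp_inr u, ← hv, NormedSpace.dual_def]

lemma convexOn_half_norm_sub_sq {E F : Type*} [AddCommGroup E] [Module ℝ E]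
    [NormedAddCommGroup F] [NormedSpace ℝ F] (L : E →ₗ[ℝ] F) (c : F) :
    ConvexOn ℝ Set.univ fun x => ‖L x - c‖ ^ 2 / 2 := by
  have := (((convexOn_norm convex_univ).pow (fun _ _ => norm_nonneg _) 2).comp_affineMap
    (L.toAffineMap - AffineMap.const ℝ E c)).smul (show (0 : ℝ) ≤ 1 / 2 by norm_num)
  simpa [div_eq_inv_mul] using this

def quadPenalty (z₀ y : X × StrongDual ℝ X) : ℝ :=
  ‖y.1 - z₀.1‖ ^ 2 / 2 + ‖y.2 - z₀.2‖ ^ 2 / 2 + pairing z₀ - (z₀.2 y.1 + y.2 z₀.1)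

lemma pairing_add_quadPenalty (z₀ y : X × StrongDual ℝ X) :
    pairing y + quadPenalty z₀ y =
      (y.2 - z₀.2) (y.1 - z₀.1) + (‖y.1 - z₀.1‖ ^ 2 / 2 + ‖y.2 - z₀.2‖ ^ 2 / 2) := by
  simp only [quadPenalty, pairing, map_sub, sub_apply]
  ring

lemma pairing_add_quadPenalty_nonneg (z₀ y : X × StrongDual ℝ X) :
    0 ≤ pairing y + quadPenalty z₀ y := by
  rw [pairing_add_quadPenalty]
  nlinarith [neg_opNorm_mul_norm_le_apply (y.2 - z₀.2) (y.1 - z₀.1),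
    sq_nonneg (‖y.1 - z₀.1‖ - ‖y.2 - z₀.2‖)]

lemma continuous_quadPenalty (z₀ : X × StrongDual ℝ X) : Continuous (quadPenalty z₀) := by
  unfold quadPenalty
  fun_prop

lemma convexOn_quadPenalty (z₀ : X × StrongDual ℝ X) : ConvexOn ℝ Set.univ (quadPenalty z₀) := by
  have h₁ := convexOn_half_norm_sub_sq (LinearMap.fst ℝ X (StrongDual ℝ X)) z₀.1
  have h₂ := convexOn_half_norm_sub_sq (LinearMap.snd ℝ X (StrongDual ℝ X)) z₀.2
  have hlin := ((z₀.2.comp (.fst ℝ X (StrongDual ℝ X)) +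
    (ContinuousLinearMap.apply ℝ ℝ z₀.1).comp (.snd ℝ X (StrongDual ℝ X)) :
      X × StrongDual ℝ X →L[ℝ] ℝ) : X × StrongDual ℝ X →ₗ[ℝ] ℝ).concaveOn convex_univ
  exact ((h₁.add h₂).add_const _).sub hlin

lemma quadPenalty_add (z₀ u : X × StrongDual ℝ X) :
    quadPenalty z₀ (z₀ + u) =
      ‖u.1‖ ^ 2 / 2 + ‖u.2‖ ^ 2 / 2 - pairing z₀ - (z₀.2 u.1 + u.2 z₀.1) := by
  simp only [quadPenalty, pairing, Prod.fst_add, Prod.snd_add, add_sub_cancel_left, map_add,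
    add_apply]
  ring

lemma exists_mem_Lset_dist_le (hrefl : IsReflexive X) {h : X × StrongDual ℝ X → EReal}
    (hconv : ConvexERealOn h) (hbot : ∀ p, h p ≠ ⊥) (hrep : ∀ p, (pairing p : EReal) ≤ h p)
    (hmax : MaximalMonotone (Lset h)) {z₀ : X × StrongDual ℝ X} {ε : ℝ}
    (hz₀ : h z₀ ≤ ((pairing z₀ + ε : ℝ) : EReal)) :
    ∃ w ∈ Lset h, dist w z₀ ≤ √(2 * ε) := by
  obtain ⟨zT, hzT⟩ := hmax.nonempty
  have hnonneg : ∀ z, 0 ≤ h z + quadPenalty z₀ z := fun z =>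
    calc (0 : EReal) ≤ ((pairing z + quadPenalty z₀ z : ℝ) : EReal) := by
          exact_mod_cast pairing_add_quadPenalty_nonneg z₀ z
      _ ≤ h z + quadPenalty z₀ z := by rw [EReal.coe_add]; exact add_le_add_left (hrep z) _
  obtain ⟨φ, hφ⟩ := exists_clm_le_of_nonneg_add hconv hbot
    ⟨zT, ne_of_eq_of_ne hzT (EReal.coe_ne_top _)⟩
    (convexOn_quadPenalty z₀) (continuous_quadPenalty z₀) hnonneg
  obtain ⟨v, v', hφv⟩ := hrefl.exists_apply_eq φ
  set a := z₀.1 + v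
  set a' := z₀.2 + v'
  set D := φ z₀ + pairing z₀ + (‖a'‖ ^ 2 / 2 + ‖a‖ ^ 2 / 2) with hD
  -- `D - φ z₀ - pairing z₀` is the conjugate of `quadPenalty z₀` at `φ`
  have hlow : ∀ z, ((D - φ z : ℝ) : EReal) ≤ h z := by
    intro z
    rcases eq_or_ne (h z) ⊤ with hz | hz
    · simp [hz]
    set r := (h z).toReal
    have hr : h z = r := (EReal.coe_toReal hz (hbot z)).symm
    rw [hr, EReal.coe_le_coe_iff]
    suffices ‖a'‖ ^ 2 / 2 + ‖a‖ ^ 2 / 2 ≤ r + φ z - φ z₀ - pairing z₀ by linarith [hD]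
    refine half_sq_norm_add_le_of_forall a' a fun u => ?_
    have hu := hφ (z₀ + u) z
    rw [hr, ← EReal.coe_add, EReal.coe_le_coe_iff, quadPenalty_add, map_sub, map_add,
      hφv u] at hu
    simp only [a, a', map_add, add_apply]
    linarith
  have hε : ‖a'‖ ^ 2 / 2 + ‖a‖ ^ 2 / 2 ≤ ε := by
    have := (hlow z₀).trans hz₀
    rw [EReal.coe_le_coe_iff] at this
    linarith [hD]
  have hmem : ((-v, -v') : X × StrongDual ℝ X) ∈ Lset h := by
    refine hmax.mem_of_forall fun q hq => ?_
    have hq' := hlow q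
    rw [show h q = _ from hq, EReal.coe_le_coe_iff] at hq'
    have hexp : (q.2 - -v') (q.1 - -v) = pairing q + φ q + v' v := by
      simp only [pairing, hφv q, sub_neg_eq_add, map_add, add_apply]
      ring
    have haa : a' a = φ z₀ + pairing z₀ + v' v := by
      simp only [a, a', pairing, hφv z₀, map_add, add_apply]
      ring
    rw [hexp]
    nlinarith [neg_opNorm_mul_norm_le_apply a' a, sq_nonneg (‖a'‖ - ‖a‖), hD]
  refine ⟨_, hmem, ?_⟩
  have hdist₁ : dist (-v) z₀.1 = ‖a‖ := by
    rw [dist_eq_norm, ← norm_neg]; congr 1; simp only [a]; abel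
  have hdist₂ : dist (-v') z₀.2 = ‖a'‖ := by
    rw [dist_eq_norm, ← norm_neg]; congr 1; simp only [a']; abel
  rw [Prod.dist_eq, hdist₁, hdist₂]
  exact max_le (Real.le_sqrt_of_sq_le (by nlinarith [sq_nonneg ‖a'‖]))
    (Real.le_sqrt_of_sq_le (by nlinarith [sq_nonneg ‖a‖]))

lemma EpiConverges.pairing_le {fs : ℕ → X × StrongDual ℝ X → EReal}
    {f : X × StrongDual ℝ X → EReal} (hepi : EpiConverges fs f)
    (hrep : ∀ n p, (pairing p : EReal) ≤ fs n p) (p : X × StrongDual ℝ X) :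
    (pairing p : EReal) ≤ f p := by
  obtain ⟨zs, hzs, hlim⟩ := (hepi p).1
  have hpair : Tendsto (fun n => (pairing (zs n) : EReal)) atTop (𝓝 (pairing p)) :=
    continuous_coe_real_ereal.continuousAt.tendsto.comp
      (continuous_pairing.continuousAt.tendsto.comp hzs)
  exact le_of_tendsto_of_tendsto' hpair hlim fun n => hrep n (zs n)

lemma EpiConverges.opLiminf_subset_Lset {fs : ℕ → X × StrongDual ℝ X → EReal}
    {f : X × StrongDual ℝ X → EReal} (hepi : EpiConverges fs f)
    (hrep : ∀ n p, (pairing p : EReal) ≤ fs n p) :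
    OpLiminf (fun n => Lset (fs n)) ⊆ Lset f := by
  rintro p ⟨zs, hzsT, hzs⟩
  have hpair : Tendsto (fun n => fs n (zs n)) atTop (𝓝 (pairing p)) := by
    simp only [show ∀ n, fs n (zs n) = pairing (zs n) from hzsT]
    exact continuous_coe_real_ereal.continuousAt.tendsto.comp
      (continuous_pairing.continuousAt.tendsto.comp hzs)
  refine le_antisymm ?_ (hepi.pairing_le hrep p)
  exact hpair.liminf_eq ▸ (hepi p).2 zs hzs

lemma EpiConverges.Lset_subset_opLiminf (hrefl : IsReflexive X)
    {fs : ℕ → X × StrongDual ℝ X → EReal} {f : X × StrongDual ℝ X → EReal}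
    (hepi : EpiConverges fs f) (hconv : ∀ n, ConvexERealOn (fs n))
    (hbot : ∀ n p, fs n p ≠ ⊥) (hrep : ∀ n p, (pairing p : EReal) ≤ fs n p)
    (hmax : ∀ n, MaximalMonotone (Lset (fs n))) :
    Lset f ⊆ OpLiminf (fun n => Lset (fs n)) := by
  intro p (hp : f p = pairing p)
  obtain ⟨zs, hzs, hlim⟩ := (hepi p).1
  rw [hp] at hlim
  have hfin : ∀ᶠ n in atTop, fs n (zs n) ≠ ⊤ := hlim.eventually_ne (EReal.coe_ne_top _)
  set ε : ℕ → ℝ := fun n => (fs n (zs n)).toReal - pairing (zs n)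
  have hε : Tendsto ε atTop (𝓝 0) := by
    have := ((EReal.tendsto_toReal (EReal.coe_ne_top _) (EReal.coe_ne_bot _)).comp hlim).sub
      (continuous_pairing.continuousAt.tendsto.comp hzs)
    simpa using this
  have hnear : ∀ n, ∃ w ∈ Lset (fs n), fs n (zs n) ≠ ⊤ → dist w (zs n) ≤ √(2 * ε n) := by
    intro n
    by_cases htop : fs n (zs n) = ⊤
    · obtain ⟨w, hw⟩ := (hmax n).nonempty
      exact ⟨w, hw, fun h => (h htop).elim⟩
    obtain ⟨w, hw, hdist⟩ := exists_mem_Lset_dist_le hrefl (hconv n) (hbot n) (hrep n) (hmax n)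
      (z₀ := zs n) (ε := ε n)
      (by rw [add_sub_cancel, EReal.coe_toReal htop (hbot n _)])
    exact ⟨w, hw, fun _ => hdist⟩
  choose ws hws hdist using hnear
  refine ⟨ws, hws, tendsto_iff_dist_tendsto_zero.mpr ?_⟩
  have hbound : Tendsto (fun n => √(2 * ε n) + dist (zs n) p) atTop (𝓝 0) := by
    simpa using ((hε.const_mul 2).sqrt).add (tendsto_iff_dist_tendsto_zero.mp hzs)
  refine squeeze_zero' (Eventually.of_forall fun n => dist_nonneg) ?_ hbound
  filter_upwards [hfin] with n hn
  exact (dist_triangle _ _ _).trans (add_le_add_left (hdist n hn) _)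

theorem stmt2_general (hrefl : IsReflexive X)
    (fs : ℕ → X × StrongDual ℝ X → EReal)
    (hfs_gamma : ∀ n, IsGamma (fs n))
    (hfs_rep : ∀ n p, (pairing p : EReal) ≤ fs n p)
    (hmax : ∀ n, MaximalMonotone (Lset (fs n)))
    (f : X × StrongDual ℝ X → EReal)
    (hepi : EpiConverges fs f) :
    Lset f = OpLiminf (fun n => Lset (fs n)) :=
  (hepi.Lset_subset_opLiminf hrefl (fun n => (hfs_gamma n).2.1) (fun n => (hfs_gamma n).2.2)
    hfs_rep hmax).antisymm (hepi.opLiminf_subset_Lset hfs_rep)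

/-- If representative functions of maximal monotone operators `T_n = L(f_n)`
epi-converge to `f`, then `L(f) = liminf T_n`. -/
theorem stmt2 [CompleteSpace X] (hrefl : IsReflexive X)
    (fs : ℕ → X × StrongDual ℝ X → EReal)
    (hfs_gamma : ∀ n, IsGamma (fs n))
    (hfs_rep : ∀ n p, (pairing p : EReal) ≤ fs n p)
    (hmax : ∀ n, MaximalMonotone (Lset (fs n)))
    (f : X × StrongDual ℝ X → EReal)
    (hepi : EpiConverges fs f) :
    Lset f = OpLiminf (fun n => Lset (fs n)) :=
  stmt2_general hrefl fs hfs_gamma hfs_rep hmax f hepi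
end
end

section
/- Let X be a reflexive Banach space and let h ∈ Γ(X × X*) be a proper lower semicontinuous convex function. Then the function g(x, x*) := (1/2)(h(x, x*) + h*(x*, x)) is a representative function, i.e. g is lower semicontinuous convex and g(x, x*) ≥ ⟨x, x*⟩ for all (x, x*) ∈ X × X*, and moreover T_h = L(g), where T_h := {(x, x*) ∈ X × X* : (x*, x) ∈ ∂h(x, x*)} and L(g) := {(x, x*) : g(x, x*) = ⟨x, x*⟩}. -/
open Filter Topology
noncomputable section
variable {X : Type*} [NormedAddCommGroup X] [NormedSpace ℝ X]

/-! Fenchel–Young for `h` at the pair `((x, x*), (x*, x))` reads `2⟨x, x*⟩ ≤ h(x, x*) + h*(x*, x)`,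
so `g ≥ ⟨·,·⟩`, with equality exactly where Fenchel–Young is an equality, i.e. on `T_h`.
The map `(x, x*) ↦ h*(x*, x)` is a supremum of continuous affine functions, hence convex and
lower semicontinuous; properness of `h` keeps it away from `⊥`, which matters because
`⊤ + ⊥ = ⊥` in `EReal`. -/

namespace EReal

lemma continuous_coe_mul {c : ℝ} (hc : c ≠ 0) : Continuous fun x : EReal => (c : EReal) * x := by
  have hc' : (c : EReal) ≠ 0 := by exact_mod_cast hc
  refine continuous_iff_continuousAt.2 fun x => ?_
  exact (EReal.continuousAt_mul (p := ((c : EReal), x)) (.inl hc') (.inl hc')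
    (.inl (coe_ne_bot c)) (.inl (coe_ne_top c))).comp (Continuous.prodMk_right _).continuousAt

lemma continuous_coe_sub (c : EReal) : Continuous fun r : ℝ => (r : EReal) - c :=
  continuous_iff_continuousAt.2 fun r =>
    (EReal.continuousAt_add (p := ((r : EReal), -c)) (.inl (coe_ne_top r))
      (.inl (coe_ne_bot r))).comp (f := fun r : ℝ => ((r : EReal), -c))
      (continuous_coe_real_ereal.prodMk continuous_const).continuousAt

lemma coe_mul_eq_coe_iff {c : ℝ} (hc : c ≠ 0) {s : EReal} {r : ℝ} :
    (c : EReal) * s = r ↔ s = ((c⁻¹ * r : ℝ) : EReal) := by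
  constructor
  · intro hs
    rw [EReal.coe_mul, ← hs, ← mul_assoc, ← EReal.coe_mul, inv_mul_cancel₀ hc, EReal.coe_one, one_mul]
  · rintro rfl
    rw [← EReal.coe_mul, mul_inv_cancel_left₀ hc]

end EReal

section ConvexERealOn

variable {E : Type*} [AddCommGroup E] [Module ℝ E]

lemma ConvexERealOn.iSup {ι : Sort*} {f : ι → E → EReal} (hf : ∀ i, ConvexERealOn (f i)) :
    ConvexERealOn fun x => ⨆ i, f i x := by
  intro x y a b ha hb hab
  refine iSup_le fun i => (hf i x y a b ha hb hab).trans (add_le_add ?_ ?_)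
  · exact mul_le_mul_of_nonneg_left (le_iSup (f · x) i) (by exact_mod_cast ha)
  · exact mul_le_mul_of_nonneg_left (le_iSup (f · y) i) (by exact_mod_cast hb)

lemma ConvexERealOn.add {f g : E → EReal} (hf : ConvexERealOn f) (hg : ConvexERealOn g) :
    ConvexERealOn fun x => f x + g x := by
  intro x y a b ha hb hab
  have distrib (c : ℝ) (hc : 0 ≤ c) (u v : EReal) : (c : EReal) * (u + v) = c * u + c * v :=
    EReal.left_distrib_of_nonneg_of_ne_top (by exact_mod_cast hc) (EReal.coe_ne_top c) u v
  rw [distrib a ha, distrib b hb, add_add_add_comm]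
  exact add_le_add (hf x y a b ha hb hab) (hg x y a b ha hb hab)

lemma ConvexERealOn.const_mul {f : E → EReal} (hf : ConvexERealOn f) {c : ℝ} (hc : 0 ≤ c) :
    ConvexERealOn fun x => (c : EReal) * f x := by
  intro x y a b ha hb hab
  calc (c : EReal) * f (a • x + b • y)
      ≤ c * (a * f x + b * f y) := mul_le_mul_of_nonneg_left (hf x y a b ha hb hab)
        (by exact_mod_cast hc)
    _ = a * (c * f x) + b * (c * f y) := by
      rw [EReal.left_distrib_of_nonneg_of_ne_top (by exact_mod_cast hc) (EReal.coe_ne_top c),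
        mul_left_comm, mul_left_comm (c : EReal)]

lemma convexERealOn_coe_sub (ℓ : E →ₗ[ℝ] ℝ) {c : EReal} (hc : c ≠ ⊥) :
    ConvexERealOn fun x => (ℓ x : EReal) - c := by
  intro x y a b ha hb hab
  induction c with
  | bot => exact absurd rfl hc
  | top => simp [EReal.sub_top]
  | coe c =>
    refine le_of_eq ?_
    simp only [← EReal.coe_sub, ← EReal.coe_mul, ← EReal.coe_add, EReal.coe_eq_coe_iff,
      map_add, map_smul, smul_eq_mul]
    linear_combination c * hab

end ConvexERealOn

def symmPairing (q : X × StrongDual ℝ X) : (X × StrongDual ℝ X) →L[ℝ] ℝ :=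
  (ContinuousLinearMap.apply ℝ ℝ q.1).comp (ContinuousLinearMap.snd ℝ X (StrongDual ℝ X)) +
    q.2.comp (ContinuousLinearMap.fst ℝ X (StrongDual ℝ X))

section Conjugate

variable {h : X × StrongDual ℝ X → EReal}

lemma conjFn_swap_eq_iSup (h : X × StrongDual ℝ X → EReal) (p : X × StrongDual ℝ X) :
    conjFn h (p.2, p.1) = ⨆ q, ((symmPairing q p : ℝ) : EReal) - h q :=
  rfl

lemma le_conjFn (h : X × StrongDual ℝ X → EReal) (q : StrongDual ℝ X × X)
    (p : X × StrongDual ℝ X) : ((q.1 p.1 + p.2 q.2 : ℝ) : EReal) - h p ≤ conjFn h q :=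
  le_iSup (fun p : X × StrongDual ℝ X => ((q.1 p.1 + p.2 q.2 : ℝ) : EReal) - h p) p

lemma conjFn_ne_bot {p₀ : X × StrongDual ℝ X} (hp₀ : h p₀ ≠ ⊤) (q : StrongDual ℝ X × X) :
    conjFn h q ≠ ⊥ := by
  refine ne_bot_of_le_ne_bot ?_ (le_conjFn h q p₀)
  rw [sub_eq_add_neg]
  exact EReal.add_ne_bot_iff.2 ⟨EReal.coe_ne_bot _, by simpa using hp₀⟩

lemma coe_le_add_conjFn {p : X × StrongDual ℝ X} {q : StrongDual ℝ X × X} (hp : h p ≠ ⊥)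
    (hq : conjFn h q ≠ ⊥) : ((q.1 p.1 + p.2 q.2 : ℝ) : EReal) ≤ h p + conjFn h q := by
  rw [add_comm (h p)]
  exact (EReal.sub_le_iff_le_add (.inl hp) (.inr hq)).1 (le_conjFn h q p)

lemma two_mul_pairing_le {p : X × StrongDual ℝ X} (hp : h p ≠ ⊥)
    (hq : conjFn h (p.2, p.1) ≠ ⊥) :
    ((2 * pairing p : ℝ) : EReal) ≤ h p + conjFn h (p.2, p.1) := by
  simpa [pairing, two_mul] using coe_le_add_conjFn hp hq

lemma lowerSemicontinuous_conjFn_swap (h : X × StrongDual ℝ X → EReal) :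
    LowerSemicontinuous fun p : X × StrongDual ℝ X => conjFn h (p.2, p.1) := by
  simp only [conjFn_swap_eq_iSup]
  exact lowerSemicontinuous_iSup fun q =>
    ((EReal.continuous_coe_sub (h q)).comp (symmPairing q).continuous).lowerSemicontinuous

lemma convexERealOn_conjFn_swap (hbot : ∀ p, h p ≠ ⊥) :
    ConvexERealOn fun p : X × StrongDual ℝ X => conjFn h (p.2, p.1) := by
  simp only [conjFn_swap_eq_iSup]
  exact ConvexERealOn.iSup fun q => convexERealOn_coe_sub (symmPairing q).toLinearMap (hbot q)

end Conjugate

theorem stmt9_general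
    (h : X × StrongDual ℝ X → EReal)
    (hh : IsGamma h) (hproper : ∃ p, h p ≠ ⊤) :
    LowerSemicontinuous (fun p : X × StrongDual ℝ X =>
        ((1 / 2 : ℝ) : EReal) * (h p + conjFn h (p.2, p.1))) ∧
    ConvexERealOn (fun p : X × StrongDual ℝ X =>
        ((1 / 2 : ℝ) : EReal) * (h p + conjFn h (p.2, p.1))) ∧
    (∀ p : X × StrongDual ℝ X,
        (pairing p : EReal) ≤ ((1 / 2 : ℝ) : EReal) * (h p + conjFn h (p.2, p.1))) ∧
    Tset h = Lset (fun p : X × StrongDual ℝ X =>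
        ((1 / 2 : ℝ) : EReal) * (h p + conjFn h (p.2, p.1))) := by
  obtain ⟨hlsc, hconv, hbot⟩ := hh
  obtain ⟨p₀, hp₀⟩ := hproper
  have hconj (p : X × StrongDual ℝ X) : conjFn h (p.2, p.1) ≠ ⊥ := conjFn_ne_bot hp₀ _
  have hhalf : (0 : ℝ) ≤ 1 / 2 := by norm_num
  refine ⟨?_, (hconv.add (convexERealOn_conjFn_swap hbot)).const_mul hhalf, fun p => ?_, ?_⟩
  · refine (EReal.continuous_coe_mul (by norm_num)).comp_lowerSemicontinuous
      (hlsc.add' (lowerSemicontinuous_conjFn_swap h) fun p =>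
        EReal.continuousAt_add (.inr (hconj p)) (.inl (hbot p)))
      fun _ _ hle => mul_le_mul_of_nonneg_left hle (by exact_mod_cast hhalf)
  · calc (pairing p : EReal) = ((1 / 2 : ℝ) : EReal) * ((2 * pairing p : ℝ) : EReal) := by
          rw [← EReal.coe_mul, one_div, inv_mul_cancel_left₀ two_ne_zero]
      _ ≤ _ := mul_le_mul_of_nonneg_left (two_mul_pairing_le (hbot p) (hconj p))
          (by exact_mod_cast hhalf)
  · ext p
    simp only [Tset, Lset, Set.mem_ofPred_eq, EReal.coe_mul_eq_coe_iff (one_half_pos.ne' : (1 / 2 : ℝ) ≠ 0)]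
    norm_num [eq_comm]

/-- For proper `h ∈ Γ(X × X*)` on a reflexive Banach space,
`g(x,x*) := (1/2)(h(x,x*) + h*(x*,x))` is a representative function and `T_h = L(g)`. -/
theorem stmt9 [CompleteSpace X] (hrefl : IsReflexive X)
    (h : X × StrongDual ℝ X → EReal)
    (hh : IsGamma h) (hproper : ∃ p, h p ≠ ⊤) :
    LowerSemicontinuous (fun p : X × StrongDual ℝ X =>
        ((1 / 2 : ℝ) : EReal) * (h p + conjFn h (p.2, p.1))) ∧
    ConvexERealOn (fun p : X × StrongDual ℝ X =>
        ((1 / 2 : ℝ) : EReal) * (h p + conjFn h (p.2, p.1))) ∧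
    (∀ p : X × StrongDual ℝ X,
        (pairing p : EReal) ≤ ((1 / 2 : ℝ) : EReal) * (h p + conjFn h (p.2, p.1))) ∧
    Tset h = Lset (fun p : X × StrongDual ℝ X =>
        ((1 / 2 : ℝ) : EReal) * (h p + conjFn h (p.2, p.1))) :=
  stmt9_general h hh hproper
end
end

section
/- Let X be a Banach space, let (T_n) ⊂ X × X* be a sequence of nonempty operators, let T := liminf T_n, and let (x, x*) ∈ T. If (x_n, x_n*) → (x, x*) strongly in X × X*, then liminf_n φ_{T_n}(x_n, x_n*) ≥ φ_T(x, x*), where φ_S denotes the Fitzpatrick function of S. -/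
open Filter Topology
noncomputable section
variable {X : Type*} [NormedAddCommGroup X] [NormedSpace ℝ X]

/-!
A point `q` of `liminf T_n` is the limit of points `w_n ∈ T_n`, and the Fitzpatrick integrand
`⟨w_n - z_n, z_n* - w_n*⟩ + ⟨z_n, z_n*⟩`, which is at most `φ_{T_n}(z_n, z_n*)`, converges to the
integrand at `(p, q)` because the duality pairing is jointly norm-continuous. Taking `liminf` and
then the supremum over `q` gives the claim.
-/

theorem Filter.Tendsto.strongDual_apply {α : Type*} {l : Filter α} {f : α → StrongDual ℝ X}
    {f₀ : StrongDual ℝ X} {g : α → X} {x₀ : X} (hf : Tendsto f l (𝓝 f₀))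
    (hg : Tendsto g l (𝓝 x₀)) : Tendsto (fun a => f a (g a)) l (𝓝 (f₀ x₀)) :=
  (isBoundedBilinearMap_apply.continuous.tendsto _).comp (hf.prodMk_nhds hg)

theorem fitz_integrand_le_fitz {T : Set (X × StrongDual ℝ X)} {p q : X × StrongDual ℝ X}
    (hq : q ∈ T) : (((p.2 - q.2) (q.1 - p.1) + p.2 p.1 : ℝ) : EReal) ≤ fitz T p :=
  le_iSup₂_of_le q hq le_rfl

theorem fitz_integrand_le_liminf_fitz {Ts : ℕ → Set (X × StrongDual ℝ X)}
    {p q : X × StrongDual ℝ X} {zs ws : ℕ → X × StrongDual ℝ X}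
    (hzs : Tendsto zs atTop (𝓝 p)) (hws : Tendsto ws atTop (𝓝 q)) (hmem : ∀ n, ws n ∈ Ts n) :
    (((p.2 - q.2) (q.1 - p.1) + p.2 p.1 : ℝ) : EReal) ≤
      liminf (fun n => fitz (Ts n) (zs n)) atTop := by
  have hlim : Tendsto (fun n => ((zs n).2 - (ws n).2) ((ws n).1 - (zs n).1) + (zs n).2 (zs n).1)
      atTop (𝓝 ((p.2 - q.2) (q.1 - p.1) + p.2 p.1)) :=
    ((hzs.snd_nhds.sub hws.snd_nhds).strongDual_apply (hws.fst_nhds.sub hzs.fst_nhds)).add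
      (hzs.snd_nhds.strongDual_apply hzs.fst_nhds)
  rw [← (EReal.tendsto_coe.2 hlim).liminf_eq]
  exact liminf_le_liminf (Eventually.of_forall fun n => fitz_integrand_le_fitz (hmem n))

theorem stmt11_general
    (Ts : ℕ → Set (X × StrongDual ℝ X))
    (p : X × StrongDual ℝ X)
    (zs : ℕ → X × StrongDual ℝ X) (hzs : Tendsto zs atTop (nhds p)) :
    fitz (OpLiminf Ts) p ≤ Filter.liminf (fun n => fitz (Ts n) (zs n)) atTop :=
  iSup₂_le fun _ ⟨_, hmem, hws⟩ => fitz_integrand_le_liminf_fitz hzs hws hmem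

/-- For nonempty operators `T_n`, `T := liminf T_n`, `(x,x*) ∈ T` and
`(x_n,x_n*) → (x,x*)` strongly, one has `liminf φ_{T_n}(x_n,x_n*) ≥ φ_T(x,x*)`. -/
theorem stmt11 [CompleteSpace X]
    (Ts : ℕ → Set (X × StrongDual ℝ X))
    (hne : ∀ n, (Ts n).Nonempty)
    (p : X × StrongDual ℝ X) (hp : p ∈ OpLiminf Ts)
    (zs : ℕ → X × StrongDual ℝ X) (hzs : Tendsto zs atTop (nhds p)) :
    fitz (OpLiminf Ts) p ≤ Filter.liminf (fun n => fitz (Ts n) (zs n)) atTop :=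
  stmt11_general Ts p zs hzs
end
end

section
/- In ℝ × ℝ, define T_n := {0} × ℝ for even n and T_n := ℝ × {0} for odd n. Then each T_n is a maximal monotone operator with convex graph, and liminf T_n = {(0, 0)}, which is monotone but not maximal monotone. -/
open Filter Topology
noncomputable section

/-- Monotone subset of `ℝ × ℝ`. -/
def MonoR (T : Set (ℝ × ℝ)) : Prop :=
  ∀ p ∈ T, ∀ q ∈ T, 0 ≤ (q.1 - p.1) * (q.2 - p.2)

/-- Maximal monotone subset of `ℝ × ℝ`. -/
def MaxMonoR (T : Set (ℝ × ℝ)) : Prop :=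
  MonoR T ∧ ∀ S : Set (ℝ × ℝ), MonoR S → T ⊆ S → S = T

/-- liminf of a sequence of operators in `ℝ × ℝ`. -/
def OpLiminfR (Ts : ℕ → Set (ℝ × ℝ)) : Set (ℝ × ℝ) :=
  {p | ∃ zs : ℕ → ℝ × ℝ, (∀ n, zs n ∈ Ts n) ∧ Tendsto zs atTop (nhds p)}

lemma monoV : MonoR (({0} : Set ℝ) ×ˢ (Set.univ : Set ℝ)) := by
  rintro ⟨a, b⟩ ⟨ha, -⟩ ⟨c, d⟩ ⟨hc, -⟩
  simp_all

lemma monoH : MonoR ((Set.univ : Set ℝ) ×ˢ ({0} : Set ℝ)) := by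
  rintro ⟨a, b⟩ ⟨-, hb⟩ ⟨c, d⟩ ⟨-, hd⟩
  simp_all

lemma maxV : MaxMonoR (({0} : Set ℝ) ×ˢ (Set.univ : Set ℝ)) := by
  refine ⟨monoV, fun S hS hsub => ?_⟩
  apply Set.Subset.antisymm _ hsub
  rintro ⟨x, y⟩ hxy
  have h1 := hS (0, y + x) (hsub (by simp)) (x, y) hxy
  have h2 := hS (0, y - x) (hsub (by simp)) (x, y) hxy
  simp only at h1 h2
  constructor
  · simp only [Set.mem_singleton_iff]
    nlinarith
  · trivial

lemma maxH : MaxMonoR ((Set.univ : Set ℝ) ×ˢ ({0} : Set ℝ)) := by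
  refine ⟨monoH, fun S hS hsub => ?_⟩
  apply Set.Subset.antisymm _ hsub
  rintro ⟨x, y⟩ hxy
  have h1 := hS (x + y, 0) (hsub (by simp)) (x, y) hxy
  have h2 := hS (x - y, 0) (hsub (by simp)) (x, y) hxy
  simp only at h1 h2
  constructor
  · trivial
  · simp only [Set.mem_singleton_iff]
    nlinarith

/-- with `T_n = {0} × ℝ` for even `n` and `T_n = ℝ × {0}` for odd `n`,
each `T_n` is maximal monotone with convex graph, and `liminf T_n = {(0,0)}` is monotone
but not maximal monotone. -/
theorem stmt13 (Ts : ℕ → Set (ℝ × ℝ))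
    (hTs : ∀ n, Ts n = if Even n then ({0} : Set ℝ) ×ˢ (Set.univ : Set ℝ)
      else (Set.univ : Set ℝ) ×ˢ ({0} : Set ℝ)) :
    (∀ n, MaxMonoR (Ts n) ∧ Convex ℝ (Ts n)) ∧
    OpLiminfR Ts = {((0 : ℝ), (0 : ℝ))} ∧
    MonoR {((0 : ℝ), (0 : ℝ))} ∧ ¬ MaxMonoR {((0 : ℝ), (0 : ℝ))} := by
  have hz : ∀ n, ((0 : ℝ), (0 : ℝ)) ∈ Ts n := by
    intro n; rw [hTs n]; split <;> simp
  refine ⟨?_, ?_, ?_, ?_⟩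
  · intro n
    rw [hTs n]
    split
    · exact ⟨maxV, (convex_singleton _).prod convex_univ⟩
    · exact ⟨maxH, convex_univ.prod (convex_singleton _)⟩
  · ext ⟨x, y⟩
    simp only [OpLiminfR, Set.mem_setOf_eq, Set.mem_singleton_iff]
    constructor
    · rintro ⟨zs, hmem, hlim⟩
      have h1 : Tendsto (fun n => (zs (2 * n)).1) atTop (nhds x) :=
        ((continuous_fst.tendsto _).comp hlim).comp
          (tendsto_atTop_atTop.2 fun b => ⟨b, fun n hn => by omega⟩)
      have h2 : Tendsto (fun n => (zs (2 * n + 1)).2) atTop (nhds y) :=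
        ((continuous_snd.tendsto _).comp hlim).comp
          (tendsto_atTop_atTop.2 fun b => ⟨b, fun n hn => by omega⟩)
      have e1 : ∀ n, (zs (2 * n)).1 = 0 := by
        intro n
        have := hmem (2 * n); rw [hTs (2 * n)] at this
        rw [if_pos (by exact ⟨n, by ring⟩)] at this
        exact this.1
      have e2 : ∀ n, (zs (2 * n + 1)).2 = 0 := by
        intro n
        have := hmem (2 * n + 1); rw [hTs (2 * n + 1)] at this
        rw [if_neg (by simp [Nat.even_add_one, Nat.even_mul])] at this
        exact this.2
      have hx : x = 0 := by
        have : Tendsto (fun _ : ℕ => (0 : ℝ)) atTop (nhds x) := by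
          simpa [e1] using h1
        exact tendsto_nhds_unique this tendsto_const_nhds
      have hy : y = 0 := by
        have : Tendsto (fun _ : ℕ => (0 : ℝ)) atTop (nhds y) := by
          simpa [e2] using h2
        exact tendsto_nhds_unique this tendsto_const_nhds
      simp [hx, hy, Prod.ext_iff]
    · intro h
      exact ⟨fun _ => ((0 : ℝ), (0 : ℝ)), hz, by rw [h]; exact tendsto_const_nhds⟩
  · rintro p hp q hq
    simp only [Set.mem_singleton_iff] at hp hq
    simp [hp, hq]
  · rintro ⟨-, hmax⟩
    have := hmax ((Set.univ : Set ℝ) ×ˢ ({0} : Set ℝ)) monoH (by simp)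
    have h1 : ((1 : ℝ), (0 : ℝ)) ∈ (Set.univ : Set ℝ) ×ˢ ({0} : Set ℝ) := by simp
    rw [this] at h1
    simp [Prod.ext_iff] at h1
end
end
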